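/- Let F be a field of characteristic 0 with a nontrivial absolute value, let (εᵢ)_{i∈ℕ} be positive reals, and let (aᵢ)_{i∈ℕ} be any sequence in F. Then there exists a sequence (bᵢ)_{i∈ℕ} in F with |bᵢ − aᵢ| < εᵢ for all i such that {bᵢ : i ∈ ℕ} is a B_h-set. -/

import Mathlib

/-!
Choose `b n` greedily in the ball of radius `ε n` around `a n`, avoiding the finitely many `x`
with `d • x + S = T` for `1 ≤ d ≤ h` and `S`, `T` sums of at most `h` earlier terms; the balls
are infinite because `v` is nontrivial. Such an `x` can be added to a `B_h`-set: in a collision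
of two sums, either `x` occurs equally often on both sides and cancels, or the difference `d` of
its multiplicities gives `d • x + S = T`.
-/
open Finset

theorem Multiset.exists_eq_replicate_add_of_notMem {α : Type*} [DecidableEq α] (s : Multiset α)
    (x : α) : ∃ k s₀, s = replicate k x + s₀ ∧ x ∉ s₀ :=
  ⟨s.count x, s.filter (· ≠ x), by rw [← filter_eq']; exact (filter_add_not _ s).symm, by simp⟩

theorem Equiv.Perm.exists_eq_comp_of_map_univ_eq {α β : Type*} [Fintype α] [DecidableEq β]
    {f g : α → β} (h : univ.val.map f = univ.val.map g) : ∃ σ : Equiv.Perm α, f = g ∘ σ := by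
  have hfib : ∀ c, Fintype.card {a // f a = c} = Fintype.card {a // g a = c} := fun c => by
    simpa [Fintype.card_subtype, Multiset.count_map, Finset.card_def, eq_comm] using
      congrArg (Multiset.count c) h
  exact ⟨Equiv.ofFiberEquiv fun c => Fintype.equivOfCardEq (hfib c),
    funext fun a => (Equiv.ofFiberEquiv_map _ a).symm⟩

lemma AbsoluteValue.IsNontrivial.infinite_ball {F : Type*} [Field F] {v : AbsoluteValue F ℝ}
    (hv : v.IsNontrivial) (c : F) {r : ℝ} (hr : 0 < r) : {x | v (x - c) < r}.Infinite := by
  obtain ⟨y, hy0, hy1⟩ := hv.exists_abv_lt_one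
  obtain ⟨K, hK⟩ := exists_pow_lt_of_lt_one hr hy1
  have hinj : Function.Injective fun k : ℕ => v y ^ (K + k) :=
    (pow_right_strictAnti₀ (v.pos hy0) hy1).injective.comp (add_right_injective K)
  refine Set.infinite_of_injective_forall_mem (f := fun k : ℕ => c + y ^ (K + k))
    (.of_comp (f := fun x => v (x - c)) (by simpa [Function.comp_def] using hinj)) fun k => ?_
  simp only [Set.mem_ofPred_eq, add_sub_cancel_left, map_pow]
  exact (pow_le_pow_of_le_one (v.nonneg y) hy1.le (by omega)).trans_lt hK

/-- Multisets of any common size `≤ h`, not only `h`: this is the form that survives cancelling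
the copies of a newly added element. -/
def IsBhSet {F : Type*} [AddCommMonoid F] (h : ℕ) (B : Set F) : Prop :=
  ∀ s t : Multiset F, (∀ x ∈ s, x ∈ B) → (∀ x ∈ t, x ∈ B) →
    Multiset.card s = Multiset.card t → Multiset.card s ≤ h → s.sum = t.sum → s = t

namespace IsBhSet

variable {F : Type*} [AddCommMonoid F] {h : ℕ}

theorem empty : IsBhSet h (∅ : Set F) := fun s t hs ht _ _ _ => by
  rw [Multiset.eq_zero_of_forall_notMem hs, Multiset.eq_zero_of_forall_notMem ht]

theorem mono {B C : Set F} (hC : IsBhSet h C) (hBC : B ⊆ C) : IsBhSet h B :=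
  fun s t hs ht => hC s t (fun x hx => hBC (hs x hx)) fun x hx => hBC (ht x hx)

theorem iUnion_of_monotone {B : ℕ → Set F} (hmono : Monotone B) (hB : ∀ n, IsBhSet h (B n)) :
    IsBhSet h (⋃ n, B n) := by
  classical
  intro s t hs ht
  obtain ⟨n, hn⟩ := hmono.directed_le.exists_mem_subset_of_finset_subset_biUnion
    (s := (s + t).toFinset) fun x hx => by
      rcases Multiset.mem_add.mp (Multiset.mem_toFinset.mp hx) with hx | hx
      exacts [hs x hx, ht x hx]
  exact hB n s t (fun x hx => hn (by simp [hx])) fun x hx => hn (by simp [hx])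

theorem exists_perm_eq_comp [DecidableEq F] {B : Set F} (hB : IsBhSet h B) {ι : Type*}
    [Fintype ι] (hι : Fintype.card ι ≤ h) {f g : ι → F} (hf : ∀ i, f i ∈ B) (hg : ∀ i, g i ∈ B)
    (hfg : ∑ i, f i = ∑ i, g i) : ∃ σ : Equiv.Perm ι, f = g ∘ σ := by
  refine Equiv.Perm.exists_eq_comp_of_map_univ_eq (hB _ _ ?_ ?_ ?_ ?_ hfg)
  · simpa using hf
  · simpa using hg
  · simp
  · simpa using hι

end IsBhSet

section Field

variable {F : Type*} [Field F] [DecidableEq F]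

/-- Padding with zeros, sums of `h` elements of `insert 0 B` are the sums of at most `h`
elements of `B`. -/
def boundedSums (h : ℕ) (B : Finset F) : Finset F :=
  ((insert 0 B).sym h).image fun m : Sym F h => (m : Multiset F).sum

def collisionSet (h : ℕ) (B : Finset F) : Finset F :=
  (Icc 1 h ×ˢ boundedSums h B ×ˢ boundedSums h B).image fun p => (p.2.2 - p.2.1) / p.1

theorem sum_mem_boundedSums {h : ℕ} {B : Finset F} {s : Multiset F} (hs : ∀ x ∈ s, x ∈ B)
    (hcard : Multiset.card s ≤ h) : s.sum ∈ boundedSums h B := by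
  refine mem_image.mpr ⟨⟨s + Multiset.replicate (h - Multiset.card s) 0, by simp; omega⟩,
    mem_sym_iff.mpr fun x hx => ?_, by simp⟩
  rcases Multiset.mem_add.mp hx with hx | hx
  · exact mem_insert_of_mem (hs x hx)
  · rw [Multiset.eq_of_mem_replicate hx]
    exact mem_insert_self 0 B

theorem mem_collisionSet_of_nsmul_add_eq [CharZero F] {h d : ℕ} {B : Finset F} {x S T : F}
    (hd : d ∈ Icc 1 h) (hS : S ∈ boundedSums h B) (hT : T ∈ boundedSums h B)
    (hx : d • x + S = T) : x ∈ collisionSet h B := by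
  have hd0 : (d : F) ≠ 0 := Nat.cast_ne_zero.mpr (by simp at hd; omega)
  refine mem_image.mpr ⟨(d, S, T), mem_product.mpr ⟨hd, mem_product.mpr ⟨hS, hT⟩⟩, ?_⟩
  rw [← hx, nsmul_eq_mul]
  field_simp
  ring

theorem IsBhSet.insert [CharZero F] {h : ℕ} {B : Finset F} (hB : IsBhSet h (B : Set F)) {x : F}
    (hx : x ∉ collisionSet h B) : IsBhSet h (insert x (B : Set F)) := by
  intro s t
  obtain ⟨k, s₀, rfl, hxs⟩ := s.exists_eq_replicate_add_of_notMem x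
  obtain ⟨l, t₀, rfl, hxt⟩ := t.exists_eq_replicate_add_of_notMem x
  wlog hlk : l ≤ k generalizing k l s₀ t₀
  · exact fun hs ht hcard hle hsum =>
      (this l t₀ hxt k s₀ hxs (by omega) ht hs hcard.symm (hcard ▸ hle) hsum.symm).symm
  intro hs ht hcard hle hsum
  have hs₀ : ∀ y ∈ s₀, y ∈ B := fun y hy =>
    (hs y (Multiset.mem_add.mpr (.inr hy))).resolve_left (ne_of_mem_of_not_mem hy hxs)
  have ht₀ : ∀ y ∈ t₀, y ∈ B := fun y hy =>
    (ht y (Multiset.mem_add.mpr (.inr hy))).resolve_left (ne_of_mem_of_not_mem hy hxt)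
  simp only [Multiset.card_add, Multiset.card_replicate, Multiset.sum_add,
    Multiset.sum_replicate] at hcard hle hsum
  rcases hlk.eq_or_lt with rfl | hlk
  · rw [hB s₀ t₀ hs₀ ht₀ (by omega) (by omega) (add_left_cancel hsum)]
  · refine absurd (mem_collisionSet_of_nsmul_add_eq (d := k - l) (by simp; omega)
      (sum_mem_boundedSums hs₀ (by omega)) (sum_mem_boundedSums ht₀ (by omega)) ?_) hx
    apply add_left_cancel (a := l • x)
    rw [← add_assoc, ← add_nsmul, Nat.add_sub_cancel' hlk.le, hsum]

section Greedy

variable (pick : ℕ → Finset F → F)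

def greedyPrefix : ℕ → Finset F
  | 0 => ∅
  | n + 1 => insert (pick n (greedyPrefix n)) (greedyPrefix n)

theorem isBhSet_range_greedy [CharZero F] (h : ℕ)
    (hpick : ∀ n B, pick n B ∉ collisionSet h B) :
    IsBhSet h (Set.range fun n => pick n (greedyPrefix pick n)) := by
  have hprefix : ∀ n, IsBhSet h (greedyPrefix pick n : Set F) := by
    intro n
    induction n with
    | zero => simpa [greedyPrefix] using IsBhSet.empty
    | succ n ih => simpa [greedyPrefix] using ih.insert (hpick n _)
  have hmono : Monotone fun n => (greedyPrefix pick n : Set F) :=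
    monotone_nat_of_le_succ fun n => by simp [greedyPrefix]
  refine (IsBhSet.iUnion_of_monotone hmono hprefix).mono ?_
  rintro _ ⟨n, rfl⟩
  exact Set.mem_iUnion.mpr ⟨n + 1, by simp [greedyPrefix]⟩

end Greedy

end Field

theorem perturbation_Bh_general (F : Type*) [Field F] [CharZero F] (v : AbsoluteValue F ℝ)
    (hv : ∃ x : F, x ≠ 0 ∧ v x ≠ 1)
    (h : ℕ) (ε : ℕ → ℝ) (hε : ∀ i, 0 < ε i) (a : ℕ → F) :
    ∃ b : ℕ → F, (∀ i, v (b i - a i) < ε i) ∧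
      ∀ f g : Fin h → F, (∀ i, f i ∈ Set.range b) → (∀ i, g i ∈ Set.range b) →
        ∑ i, f i = ∑ i, g i → ∃ σ : Equiv.Perm (Fin h), f = g ∘ σ := by
  classical
  choose pick hpick_near hpick_avoid using fun n (B : Finset F) =>
    ((AbsoluteValue.IsNontrivial.infinite_ball hv (a n) (hε n)).exists_notMem_finset
      (collisionSet h B))
  exact ⟨fun n => pick n (greedyPrefix pick n), fun n => hpick_near n _,
    fun f g => (isBhSet_range_greedy pick h hpick_avoid).exists_perm_eq_comp
      (Fintype.card_fin h).le⟩

/-- Perturbation theorem for B_h-sets: any sequence in a characteristic-0 field with a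
nontrivial absolute value can be ε-perturbed to a B_h-set. -/
theorem perturbation_Bh (F : Type*) [Field F] [CharZero F] (v : AbsoluteValue F ℝ)
    (hv : ∃ x : F, x ≠ 0 ∧ v x ≠ 1)
    (h : ℕ) (hh : 1 ≤ h) (ε : ℕ → ℝ) (hε : ∀ i, 0 < ε i) (a : ℕ → F) :
    ∃ b : ℕ → F, (∀ i, v (b i - a i) < ε i) ∧
      ∀ f g : Fin h → F, (∀ i, f i ∈ Set.range b) → (∀ i, g i ∈ Set.range b) →
        ∑ i, f i = ∑ i, g i → ∃ σ : Equiv.Perm (Fin h), f = g ∘ σ :=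
  perturbation_Bh_general F v hv h ε hε a
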